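/- arXiv:1206.4355 — 2 statements merged into one kernel-verified Lean document; each statement's English description precedes it below -/
import Mathlib

section
/- Let n be a squarefree positive integer. Then n is λ-practical if and only if n is φ-practical. -/
open scoped Classical

/-- `n` is φ-practical: `X^n - 1` has a divisor in `ℤ[X]` of every degree `1 ≤ m ≤ n`. -/
def PhiPractical (n : ℕ) : Prop :=
  ∀ m : ℕ, 1 ≤ m → m ≤ n →
    ∃ g : Polynomial ℤ, g ∣ (Polynomial.X ^ n - 1) ∧ g.natDegree = m

/-- `n` is p-practical: `X^n - 1` has a divisor in `𝔽_p[X]` of every degree `1 ≤ m ≤ n`. -/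
def PPractical (p n : ℕ) : Prop :=
  ∀ m : ℕ, 1 ≤ m → m ≤ n →
    ∃ g : Polynomial (ZMod p), g ∣ (Polynomial.X ^ n - 1) ∧ g.natDegree = m

/-- `n` is λ-practical: `n` is p-practical for every prime `p`. -/
def LambdaPractical (n : ℕ) : Prop := ∀ p : ℕ, p.Prime → PPractical p n

/-- `ℓ_p*(d)`: the multiplicative order of `p` modulo the largest divisor of `d`
coprime to `p` (for `p` prime, this largest divisor is `ordCompl[p] d`). -/
noncomputable def lstar (p d : ℕ) : ℕ := orderOf ((p : ZMod (ordCompl[p] d)))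

/-- The Carmichael function `λ(d)`: the exponent of `(ℤ/dℤ)ˣ`. -/
noncomputable def carmichael (d : ℕ) : ℕ := Monoid.exponent (ZMod d)ˣ

/-- `n` is weakly φ-practical: writing `n = p₁^{e₁} ⋯ p_k^{e_k}` with `p₁ < ⋯ < p_k`,
each `p_{i+1} ≤ p₁^{e₁} ⋯ p_i^{e_i} + 2`; equivalently, every prime `q ∣ n` satisfies
`q ≤ (∏_{r ∣ n, r prime, r < q} r^{v_r(n)}) + 2`. -/
def WeaklyPhiPractical (n : ℕ) : Prop :=
  0 < n ∧ ∀ q : ℕ, q.Prime → q ∣ n →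
    q ≤ (∏ r ∈ n.primeFactors.filter (· < q), r ^ n.factorization r) + 2

/-!
For squarefree `n` both properties are equivalent to `n` being weakly φ-practical. Reducing a
divisor of `X ^ n - 1` in `ℤ[X]` modulo `p` keeps its degree, since its leading coefficient is a
unit. If `n = N * q` is weakly φ-practical, `q` its largest prime factor, then `q ≤ N + 2`, and
induction on the prime factors writes every `m ≤ n` as `∑ d ∈ S, φ d` for a set `S` of divisors
of `n`; then `∏ d ∈ S, Φ_d` divides `X ^ n - 1` and has degree `m`. Conversely, if a prime `q ∣ n`
exceeds `M + 2`, `M` the part of `n` made of primes below `q`, Dirichlet's theorem gives a prime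
`p` that is a primitive root modulo every prime factor of `n`. Over `𝔽_p` every irreducible factor
of `X ^ n - 1` of degree below `q - 1` then divides `X ^ M - 1`, so the squarefree `X ^ n - 1` has
no divisor of degree `M + 1`.
-/

open Polynomial Finset
open scoped Nat

theorem Polynomial.natDegree_map_of_dvd_monic {S R : Type*} [CommRing S] [IsDomain S] [CommRing R]
    [Nontrivial R] (f : S →+* R) {p q : S[X]} (hp : p.Monic) (hq : q ∣ p) :
    (q.map f).natDegree = q.natDegree :=
  natDegree_map_of_leadingCoeff_ne_zero f ((hp.isUnit_leadingCoeff_of_dvd hq).map f).ne_zero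

theorem PhiPractical.pPractical {n : ℕ} (h : PhiPractical n) {p : ℕ} (hp : p ≠ 1) :
    PPractical p n := by
  have : Nontrivial (ZMod p) := ZMod.nontrivial_iff.mpr hp
  intro m hm hmn
  obtain ⟨g, hg, rfl⟩ := h m hm hmn
  let f := Int.castRingHom (ZMod p)
  refine ⟨g.map f, by simpa using Polynomial.map_dvd f hg, ?_⟩
  exact natDegree_map_of_dvd_monic f (by simpa using monic_X_pow_sub_C (1 : ℤ) (by omega)) hg

theorem PhiPractical.lambdaPractical {n : ℕ} (h : PhiPractical n) : LambdaPractical n :=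
  fun _ hp => h.pPractical hp.ne_one

theorem Nat.exists_add_mul_eq_of_le_mul {N k m : ℕ} (hk : k ≤ N + 1) (hm : m ≤ N * (k + 1)) :
    ∃ s t, s ≤ N ∧ t ≤ N ∧ s + t * k = m := by
  rcases le_or_gt (m / k) N with h | h
  · refine ⟨m % k, m / k, ?_, h, Nat.mod_add_div' m k⟩
    rcases k.eq_zero_or_pos with rfl | hk0
    · simpa using hm
    · have := Nat.mod_lt m hk0
      omega
  · refine ⟨m - N * k, N, ?_, le_rfl, ?_⟩
    · rw [mul_add_one] at hm
      omega
    · have : N * k ≤ m := (Nat.mul_le_mul_right k h.le).trans (Nat.div_mul_le_self m k)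
      rw [mul_comm N k] at this ⊢
      omega

theorem Nat.exists_subset_divisors_sum_totient_mul_prime {N q : ℕ} (hq : q.Prime)
    (hqN : ¬q ∣ N) (hqle : q ≤ N + 2)
    (hN : ∀ m ≤ N, ∃ S ⊆ N.divisors, ∑ d ∈ S, φ d = m) :
    ∀ m ≤ N * q, ∃ S ⊆ (N * q).divisors, ∑ d ∈ S, φ d = m := by
  intro m hm
  have hNq : N * q ≠ 0 := mul_ne_zero (by rintro rfl; exact hqN (dvd_zero q)) hq.ne_zero
  have hq1 : q - 1 + 1 = q := Nat.sub_add_cancel hq.one_le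
  obtain ⟨s, t, hs, ht, rfl⟩ :=
    Nat.exists_add_mul_eq_of_le_mul (k := q - 1) (by omega) (hq1 ▸ hm)
  obtain ⟨S, hS, rfl⟩ := hN s hs
  obtain ⟨T, hT, rfl⟩ := hN t ht
  have hdvdN : ∀ {d}, d ∈ N.divisors → d ∣ N := Nat.dvd_of_mem_divisors
  refine ⟨S ∪ T.image (· * q), union_subset ?_ ?_, ?_⟩
  · exact hS.trans (Nat.divisors_subset_of_dvd hNq (dvd_mul_right N q))
  · intro d hd
    obtain ⟨e, he, rfl⟩ := mem_image.mp hd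
    exact Nat.mem_divisors.mpr ⟨mul_dvd_mul_right (hdvdN (hT he)) q, hNq⟩
  have hdisj : Disjoint S (T.image (· * q)) := by
    refine disjoint_left.mpr fun d hdS hdT => ?_
    obtain ⟨e, -, rfl⟩ := mem_image.mp hdT
    exact hqN ((dvd_mul_left q e).trans (hdvdN (hS hdS)))
  have htotient : ∀ e ∈ T, φ (e * q) = φ e * (q - 1) := fun e he => by
    have hcop : e.Coprime q :=
      (Nat.coprime_comm.mp (hq.coprime_iff_not_dvd.mpr hqN)).coprime_dvd_left (hdvdN (hT he))
    rw [Nat.totient_mul hcop, Nat.totient_prime hq]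
  rw [sum_union hdisj, sum_image fun a _ b _ hab => Nat.eq_of_mul_eq_mul_right hq.pos hab,
    sum_congr rfl htotient, sum_mul]

/-- The largest divisor of `n` all of whose prime factors are below `q`. -/
def Nat.smoothPart (n q : ℕ) : ℕ :=
  ∏ r ∈ n.primeFactors.filter (· < q), r ^ n.factorization r

theorem Nat.smoothPart_dvd (n q : ℕ) : n.smoothPart q ∣ n := by
  rcases eq_or_ne n 0 with rfl | hn
  · exact dvd_zero _
  conv_rhs =>
    rw [← Nat.prod_factorization_pow_eq_self hn, Nat.prod_factorization_eq_prod_primeFactors]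
  exact prod_dvd_prod_of_subset _ _ _ (filter_subset _ _)

theorem Nat.lt_of_prime_dvd_smoothPart {n q r : ℕ} (hr : r.Prime) (hrn : r ∣ n.smoothPart q) :
    r < q := by
  obtain ⟨a, ha, hra⟩ := (Prime.dvd_finsetProd_iff hr.prime _).mp hrn
  rw [mem_filter] at ha
  have hra' := hr.dvd_of_dvd_pow hra
  rw [(Nat.prime_dvd_prime_iff_eq hr (Nat.prime_of_mem_primeFactors ha.1)).mp hra']
  exact ha.2

theorem Nat.dvd_smoothPart {n q d : ℕ} (hn : n ≠ 0) (hd : d ∣ n)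
    (hlt : ∀ r, r.Prime → r ∣ d → r < q) : d ∣ n.smoothPart q := by
  refine (Nat.dvd_iff_prime_pow_dvd_dvd _ d).mpr fun r k hr hrk => ?_
  rcases eq_or_ne k 0 with rfl | hk
  · simp
  have hrd : r ∣ d := (dvd_pow_self r hk).trans hrk
  refine (pow_dvd_pow r ((hr.pow_dvd_iff_le_factorization hn).mp (hrk.trans hd))).trans
    (dvd_prod_of_mem _ (mem_filter.mpr ⟨?_, hlt r hr hrd⟩))
  exact Nat.mem_primeFactors.mpr ⟨hr, hrd.trans hd, hn⟩

theorem Nat.smoothPart_eq_self {n q : ℕ} (hn : n ≠ 0)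
    (hlt : ∀ r, r.Prime → r ∣ n → r < q) : n.smoothPart q = n :=
  Nat.dvd_antisymm (Nat.smoothPart_dvd n q) (Nat.dvd_smoothPart hn dvd_rfl hlt)

theorem Nat.smoothPart_mul_prime {N q q' : ℕ} (hN : N ≠ 0) (hq : q.Prime) (hq' : q' ≤ q) :
    (N * q).smoothPart q' = N.smoothPart q' := by
  unfold Nat.smoothPart
  rw [Nat.primeFactors_mul hN hq.ne_zero, hq.primeFactors, union_singleton, filter_insert,
    if_neg (by omega)]
  refine prod_congr rfl fun r hr => ?_
  have hrq : r ≠ q := by have := (mem_filter.mp hr).2; omega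
  rw [Nat.factorization_mul hN hq.ne_zero, hq.factorization, Finsupp.add_apply,
    Finsupp.single_eq_of_ne hrq, add_zero]

theorem weaklyPhiPractical_iff {n : ℕ} :
    WeaklyPhiPractical n ↔ 0 < n ∧ ∀ q, q.Prime → q ∣ n → q ≤ n.smoothPart q + 2 :=
  Iff.rfl

theorem WeaklyPhiPractical.of_mul_prime {N q : ℕ} (hw : WeaklyPhiPractical (N * q))
    (hq : q.Prime) (hlt : ∀ r, r.Prime → r ∣ N → r < q) :
    WeaklyPhiPractical N ∧ q ≤ N + 2 := by
  rw [weaklyPhiPractical_iff] at hw ⊢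
  have hN : N ≠ 0 := by rintro rfl; simp at hw
  refine ⟨⟨Nat.pos_of_ne_zero hN, fun r hr hrN => ?_⟩, ?_⟩
  · simpa [Nat.smoothPart_mul_prime hN hq (hlt r hr hrN).le] using
      hw.2 r hr (dvd_mul_of_dvd_left hrN q)
  · simpa [Nat.smoothPart_mul_prime hN hq le_rfl, Nat.smoothPart_eq_self hN hlt] using
      hw.2 q hq (dvd_mul_left q N)

theorem WeaklyPhiPractical.exists_subset_divisors_sum_totient_of_prod_primes (s : Finset ℕ)
    (hs : ∀ r ∈ s, r.Prime) (hw : WeaklyPhiPractical (∏ r ∈ s, r)) :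
    ∀ m ≤ ∏ r ∈ s, r, ∃ S ⊆ (∏ r ∈ s, r).divisors, ∑ d ∈ S, φ d = m := by
  induction s using Finset.induction_on_max with
  | empty =>
    intro m hm
    interval_cases m
    · exact ⟨∅, empty_subset _, rfl⟩
    · exact ⟨{1}, by simp, by simp⟩
  | insert q s hlt ih =>
    have hq : q.Prime := hs q (mem_insert_self q s)
    have hs' : ∀ r ∈ s, r.Prime := fun r hr => hs r (mem_insert_of_mem hr)
    have hlt' : ∀ r, r.Prime → r ∣ ∏ r ∈ s, r → r < q := fun r hr hrs => by
      obtain ⟨a, ha, hra⟩ := (Prime.dvd_finsetProd_iff hr.prime _).mp hrs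
      exact ((Nat.prime_dvd_prime_iff_eq hr (hs' a ha)).mp hra) ▸ hlt a ha
    rw [prod_insert fun hqs => (hlt q hqs).false, mul_comm] at hw ⊢
    obtain ⟨hwN, hqle⟩ := hw.of_mul_prime hq hlt'
    exact Nat.exists_subset_divisors_sum_totient_mul_prime hq (fun h => (hlt' q hq h).false) hqle
      (ih hs' hwN)

theorem phiPractical_of_forall_exists_subset_divisors_sum_totient {n : ℕ} (hn : n ≠ 0)
    (h : ∀ m ≤ n, ∃ S ⊆ n.divisors, ∑ d ∈ S, φ d = m) : PhiPractical n := by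
  intro m _ hm
  obtain ⟨S, hS, rfl⟩ := h m hm
  refine ⟨∏ d ∈ S, cyclotomic d ℤ, ?_, ?_⟩
  · rw [← prod_cyclotomic_eq_X_pow_sub_one (Nat.pos_of_ne_zero hn)]
    exact prod_dvd_prod_of_subset _ _ _ hS
  · rw [natDegree_prod _ _ fun d _ => cyclotomic_ne_zero d ℤ]
    simp only [natDegree_cyclotomic]

theorem WeaklyPhiPractical.phiPractical {n : ℕ} (hw : WeaklyPhiPractical n)
    (hsf : Squarefree n) : PhiPractical n := by
  rw [← Nat.prod_primeFactors_of_squarefree hsf] at hw ⊢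
  exact phiPractical_of_forall_exists_subset_divisors_sum_totient hw.1.ne' <|
    hw.exists_subset_divisors_sum_totient_of_prod_primes _ fun _ => Nat.prime_of_mem_primeFactors

theorem exists_prime_forall_orderOf_natCast_eq_sub_one (s : Finset ℕ)
    (hs : ∀ r ∈ s, r.Prime) :
    ∃ p : ℕ, p.Prime ∧ ∀ r ∈ s, orderOf (p : ZMod r) = r - 1 := by
  have hgen : ∀ r ∈ s, ∃ g : (ZMod r)ˣ, orderOf (g : ZMod r) = r - 1 := fun r hr => by
    have := Fact.mk (hs r hr)
    obtain ⟨g, hg⟩ := IsCyclic.exists_ofOrder_eq_natCard (α := (ZMod r)ˣ)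
    exact ⟨g, by rw [orderOf_units, hg, Nat.card_eq_fintype_card, ZMod.card_units]⟩
  choose! g hg using hgen
  obtain ⟨b, hb⟩ := Nat.chineseRemainderOfFinset (fun r => (g r : ZMod r).val) id s
    (fun r hr => (hs r hr).ne_zero)
    (fun r hr r' hr' hne => (Nat.coprime_primes (hs r hr) (hs r' hr')).mpr hne)
  have hbg : ∀ r ∈ s, (b : ZMod r) = g r := fun r hr => by
    have := Fact.mk (hs r hr)
    rw [(ZMod.natCast_eq_natCast_iff _ _ _).mpr (hb r hr), ZMod.natCast_zmod_val]
  have : NeZero (∏ r ∈ s, r) := ⟨prod_ne_zero_iff.mpr fun r hr => (hs r hr).ne_zero⟩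
  have hunit : IsUnit (b : ZMod (∏ r ∈ s, r)) := by
    refine (ZMod.isUnit_iff_coprime _ _).mpr (Nat.Coprime.prod_right fun r hr => ?_)
    have := Fact.mk (hs r hr)
    rw [Nat.coprime_comm, (hs r hr).coprime_iff_not_dvd, ← ZMod.natCast_eq_zero_iff, hbg r hr]
    exact (g r).ne_zero
  obtain ⟨p, -, hp, hpb⟩ := Nat.forall_exists_prime_gt_and_eq_mod hunit 0
  refine ⟨p, hp, fun r hr => ?_⟩
  have hpb' := ((ZMod.natCast_eq_natCast_iff _ _ _).mp hpb).of_dvd (dvd_prod_of_mem id hr)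
  rw [(ZMod.natCast_eq_natCast_iff _ _ _).mpr hpb', hbg r hr, hg r hr]

theorem Squarefree.dvd_of_forall_irreducible_dvd {α : Type*} [CommMonoidWithZero α]
    [Nontrivial α] [GCDMonoid α] [WfDvdMonoid α] {f g : α} (hg : Squarefree g)
    (h : ∀ x, Irreducible x → x ∣ g → x ∣ f) : g ∣ f := by
  obtain ⟨u, hu⟩ := gcd_dvd_left g f
  by_cases hunit : IsUnit u
  · exact hu ▸ hunit.mul_right_dvd.mpr (gcd_dvd_right g f)
  have hu0 : u ≠ 0 := by rintro rfl; rw [mul_zero] at hu; exact hg.ne_zero hu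
  obtain ⟨x, hx, hxu⟩ := WfDvdMonoid.exists_irreducible_factor hunit hu0
  have hxg : x ∣ g := hu ▸ dvd_mul_of_dvd_right hxu _
  exact absurd (hg x (hu ▸ mul_dvd_mul (dvd_gcd hxg (h x hx hxg)) hxu)) hx.not_isUnit

/-- The order of a root of `h` in `AdjoinRoot h` is the `d` of the conclusion. -/
theorem Irreducible.exists_dvd_card_pow_natDegree_sub_one_and_dvd_X_pow_sub_one_iff {F : Type*}
    [Field F] [Fintype F] {h : F[X]} (hirr : Irreducible h) {n : ℕ} (hn : n ≠ 0)
    (hdvd : h ∣ X ^ n - 1) :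
    ∃ d, d ∣ Fintype.card F ^ h.natDegree - 1 ∧ ∀ M, h ∣ X ^ M - 1 ↔ d ∣ M := by
  have := Fact.mk hirr
  let pb := AdjoinRoot.powerBasis hirr.ne_zero
  let : Fintype (AdjoinRoot h) := Module.fintypeOfFintype pb.basis
  have hcard : Fintype.card (AdjoinRoot h) = Fintype.card F ^ h.natDegree := by
    rw [Module.card_fintype pb.basis, Fintype.card_fin, AdjoinRoot.powerBasis_dim]
  have hroot : ∀ M, h ∣ X ^ M - 1 ↔ AdjoinRoot.root h ^ M = 1 := fun M => by
    rw [← AdjoinRoot.mk_eq_zero, ← AdjoinRoot.aeval_eq]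
    simp [sub_eq_zero]
  refine ⟨orderOf (AdjoinRoot.root h), ?_,
    fun M => (hroot M).trans orderOf_dvd_iff_pow_eq_one.symm⟩
  rw [← hcard]
  refine orderOf_dvd_of_pow_eq_one (FiniteField.pow_card_sub_one_eq_one _ fun h0 => ?_)
  simpa [h0, zero_pow hn] using (hroot n).mp hdvd

theorem orderOf_natCast_dvd_of_dvd_pow_sub_one {p k r : ℕ} (hp : p ≠ 0) (hr : r ∣ p ^ k - 1) :
    orderOf (p : ZMod r) ∣ k := by
  refine orderOf_dvd_of_pow_eq_one ?_
  have := (ZMod.natCast_eq_zero_iff _ _).mpr hr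
  rwa [Nat.cast_sub (Nat.one_le_pow _ _ (Nat.pos_of_ne_zero hp)), sub_eq_zero, Nat.cast_pow,
    Nat.cast_one] at this

/-- An irreducible factor whose roots have order divisible by a prime `r ≥ q` has degree divisible
by the order `r - 1` of `p` modulo `r`. -/
theorem dvd_X_pow_smoothPart_sub_one {p n q : ℕ} [Fact p.Prime] (hn : n ≠ 0)
    (hord : ∀ r ∈ n.primeFactors, orderOf (p : ZMod r) = r - 1) {g : (ZMod p)[X]}
    (hg : g ∣ X ^ n - 1) (hdeg : g.natDegree + 1 < q) : g ∣ X ^ n.smoothPart q - 1 := by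
  have hp : p.Prime := Fact.out
  have hpn : ¬p ∣ n := fun hpn => by
    have := hord p (Nat.mem_primeFactors.mpr ⟨hp, hpn, hn⟩)
    rw [ZMod.natCast_self, orderOf_zero] at this
    exact absurd this (by have := hp.two_le; omega)
  have hsep : (X ^ n - 1 : (ZMod p)[X]).Separable := by
    have hn' : (n : ZMod p) ≠ 0 := by rwa [Ne, ZMod.natCast_eq_zero_iff]
    simpa using separable_X_pow_sub_C (1 : ZMod p) hn' one_ne_zero
  have hg0 : g ≠ 0 := ne_zero_of_dvd_ne_zero hsep.ne_zero hg
  refine (hsep.squarefree.squarefree_of_dvd hg).dvd_of_forall_irreducible_dvd fun h hirr hhg => ?_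
  obtain ⟨d, hd, hiff⟩ :=
    hirr.exists_dvd_card_pow_natDegree_sub_one_and_dvd_X_pow_sub_one_iff hn (hhg.trans hg)
  rw [ZMod.card] at hd
  refine (hiff _).mpr (Nat.dvd_smoothPart hn ((hiff n).mp (hhg.trans hg)) fun r hr hrd => ?_)
  by_contra! hqr
  have hrn : r ∈ n.primeFactors :=
    Nat.mem_primeFactors.mpr ⟨hr, hrd.trans ((hiff n).mp (hhg.trans hg)), hn⟩
  have hrh := Nat.le_of_dvd hirr.natDegree_pos
    (hord r hrn ▸ orderOf_natCast_dvd_of_dvd_pow_sub_one hp.ne_zero (hrd.trans hd))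
  have := natDegree_le_of_dvd hhg hg0
  omega

theorem LambdaPractical.weaklyPhiPractical {n : ℕ} (hn : 0 < n) (h : LambdaPractical n) :
    WeaklyPhiPractical n := by
  refine weaklyPhiPractical_iff.mpr ⟨hn, fun q hq hqn => ?_⟩
  by_contra! hlt
  obtain ⟨p, hp, hord⟩ := exists_prime_forall_orderOf_natCast_eq_sub_one n.primeFactors
    fun _ => Nat.prime_of_mem_primeFactors
  have := Fact.mk hp
  have hM : n.smoothPart q ≠ 0 := fun h0 => hn.ne' (zero_dvd_iff.mp (h0 ▸ n.smoothPart_dvd q))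
  have hMn : n.smoothPart q < n := (Nat.le_of_dvd hn (n.smoothPart_dvd q)).lt_of_ne fun he =>
    (Nat.lt_of_prime_dvd_smoothPart hq (he ▸ hqn)).false
  obtain ⟨g, hg, hdeg⟩ := h p hp (n.smoothPart q + 1) (by omega) hMn
  have := natDegree_le_of_dvd (dvd_X_pow_smoothPart_sub_one (q := q) hn.ne' hord hg (by omega))
    (by simpa using (monic_X_pow_sub_C (1 : ZMod p) hM).ne_zero)
  rw [← C_1, natDegree_X_pow_sub_C] at this
  omega

theorem stmt12 (n : ℕ) (hn : 0 < n) (hsf : Squarefree n) :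
    LambdaPractical n ↔ PhiPractical n :=
  ⟨fun h => (h.weaklyPhiPractical hn).phiPractical hsf, PhiPractical.lambdaPractical⟩
end

section
/- Let p be a prime, let m be a p-practical number, and let q be a prime with gcd(q, m) = 1. If ℓ_p*(q) ≤ m + 1, then n = mq is p-practical. Moreover, if k ≥ 2 and ℓ_p*(q) ≤ m, then n = m·q^k is p-practical. -/
open scoped Classical

/-!
Over `𝔽_p`, with `ℓ = ℓ_p*(q)` for a prime `q ≠ p`, we have `X^{nq} - 1 = (X^n - 1) Φ_q(X^n)`, and
`Φ_q` is a product of `(q - 1)/ℓ` irreducible factors `f` of degree `ℓ`. Let `α` be a root of `f`;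
since `α^q = 1` and `gcd(m, q) = 1`, `α = β^m` for some `β ∈ 𝔽_p(α)`. If `g ∣ X^m - 1` has degree
`s`, then `g(β⁻¹ X^B)` divides `X^{mB} - α`, and its norm (the product of its Galois conjugates)
is a divisor of `f(X^{mB})` in `𝔽_p[X]` of degree `ℓ s B`. So `Φ_q(X^{mB})` has divisors of every
degree `ℓ B u` with `u ≤ (q - 1) m / ℓ`. When `ℓ B ≤ mB + 1` these steps are fine enough that,
together with divisors of `X^{mB} - 1` of every degree `≤ mB`, they give divisors of
`X^{mBq} - 1` of every degree `≤ mBq`; take `B = 1`, resp. iterate over `B = q^j`.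
For `q = p`, `X^{mp^k} - 1 = (X^m - 1)^{p^k}`.
-/

open Polynomial Set
open scoped Pointwise

theorem Nat.Iic_add_mul_subset_Iic_add_image_mul {a d N : ℕ} (hd : d ≤ a + 1) :
    Iic (a + d * N) ⊆ Iic a + (d * ·) '' Iic N := by
  intro t (ht : t ≤ a + d * N)
  set u := min N (t / d)
  have hdu : d * u ≤ t := (Nat.mul_le_mul_left d (min_le_right _ _)).trans (Nat.mul_div_le t d)
  refine mem_add.mpr ⟨t - d * u, ?_, d * u, mem_image_of_mem _ (mem_Iic.mpr (min_le_left _ _)),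
    Nat.sub_add_cancel hdu⟩
  rcases le_total N (t / d) with h | h
  · rw [mem_Iic, show u = N from min_eq_left h]
    omega
  · rw [mem_Iic, show u = t / d from min_eq_right h, ← Nat.mod_eq_sub_mul_div]
    rcases Nat.eq_zero_or_pos d with rfl | hd0
    · simpa using ht
    · have := Nat.mod_lt t hd0
      omega

theorem Nat.Iic_add_subset_Iic_add_Iic (a b : ℕ) : Iic (a + b) ⊆ Iic a + Iic b := by
  simpa using Nat.Iic_add_mul_subset_Iic_add_image_mul (a := a) (d := 1) (N := b) (by omega)

namespace Polynomial

variable {R : Type*}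

def divisorDegrees [Semiring R] (P : R[X]) : Set ℕ := {d | ∃ g, g ∣ P ∧ g.natDegree = d}

section Semiring

variable [Semiring R] {P Q : R[X]}

theorem zero_mem_divisorDegrees (P : R[X]) : 0 ∈ divisorDegrees P :=
  ⟨1, one_dvd P, natDegree_one⟩

theorem divisorDegrees_mono (h : P ∣ Q) : divisorDegrees P ⊆ divisorDegrees Q :=
  fun _ ⟨g, hg, hdeg⟩ ↦ ⟨g, hg.trans h, hdeg⟩

theorem divisorDegrees_eq_of_associated (h : Associated P Q) :
    divisorDegrees P = divisorDegrees Q :=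
  (divisorDegrees_mono h.dvd).antisymm (divisorDegrees_mono h.symm.dvd)

end Semiring

theorem comp_dvd_comp [CommSemiring R] {a b : R[X]} (h : a ∣ b) (r : R[X]) :
    a.comp r ∣ b.comp r := by
  obtain ⟨c, rfl⟩ := h
  exact ⟨c.comp r, mul_comp a c r⟩

section Domain

variable [CommRing R] [IsDomain R] {P Q : R[X]}

theorem divisorDegrees_zero : divisorDegrees (0 : R[X]) = univ :=
  eq_univ_of_forall fun d ↦ ⟨X ^ d, dvd_zero _, natDegree_X_pow d⟩

theorem add_subset_divisorDegrees_mul :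
    divisorDegrees P + divisorDegrees Q ⊆ divisorDegrees (P * Q) := by
  rcases eq_or_ne (P * Q) 0 with hPQ | hPQ
  · simp [hPQ, divisorDegrees_zero]
  rintro _ ⟨_, ⟨g, hg, rfl⟩, _, ⟨h, hh, rfl⟩, rfl⟩
  have hgh : g * h ∣ P * Q := mul_dvd_mul hg hh
  exact ⟨g * h, hgh, natDegree_mul (left_ne_zero_of_mul (ne_zero_of_dvd_ne_zero hPQ hgh))
    (right_ne_zero_of_mul (ne_zero_of_dvd_ne_zero hPQ hgh))⟩

theorem Iic_mul_subset_divisorDegrees_pow {a : ℕ} (h : Iic a ⊆ divisorDegrees P)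
    (e : ℕ) : Iic (e * a) ⊆ divisorDegrees (P ^ e) := by
  induction e with
  | zero =>
    intro t ht
    rw [mem_Iic, zero_mul, Nat.le_zero] at ht
    exact ht.symm ▸ zero_mem_divisorDegrees _
  | succ e ih =>
    calc Iic ((e + 1) * a) = Iic (e * a + a) := by rw [add_one_mul]
      _ ⊆ Iic (e * a) + Iic a := Nat.Iic_add_subset_Iic_add_Iic _ _
      _ ⊆ divisorDegrees (P ^ e) + divisorDegrees P := add_subset_add ih h
      _ ⊆ divisorDegrees (P ^ (e + 1)) := pow_succ P e ▸ add_subset_divisorDegrees_mul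

theorem image_mul_Iic_subset_divisorDegrees_prod {d m : ℕ} (s : Multiset R[X])
    (h : ∀ P ∈ s, (d * ·) '' Iic m ⊆ divisorDegrees P) :
    (d * ·) '' Iic (Multiset.card s * m) ⊆ divisorDegrees s.prod := by
  induction s using Multiset.induction_on with
  | empty =>
    rintro _ ⟨u, hu, rfl⟩
    rw [mem_Iic, Multiset.card_zero, zero_mul, Nat.le_zero] at hu
    subst hu
    exact (mul_zero d).symm ▸ zero_mem_divisorDegrees _
  | cons P s ih =>
    rintro _ ⟨u, hu, rfl⟩
    rw [Multiset.prod_cons]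
    refine add_subset_divisorDegrees_mul
      (mem_add.mpr ⟨d * min u m, ?_, d * (u - min u m), ?_, ?_⟩)
    · exact h P (Multiset.mem_cons_self P s) ⟨_, mem_Iic.mpr (min_le_right u m), rfl⟩
    · refine ih (fun Q hQ ↦ h Q (Multiset.mem_cons_of_mem hQ)) ⟨_, mem_Iic.mpr ?_, rfl⟩
      rw [Multiset.card_cons, add_one_mul] at hu
      have := mem_Iic.mp hu
      omega
    · rw [← mul_add, Nat.add_sub_cancel' (min_le_left u m)]

end Domain

section Galois

variable {K L : Type*} [Field K] [Field L] [Algebra K L] [FiniteDimensional K L]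

theorem prod_X_sub_C_algEquiv_dvd_map {f : K[X]} {α : L} (hα : aeval α f = 0)
    (hinj : Function.Injective fun σ : Gal(L/K) ↦ σ α) :
    ∏ σ : Gal(L/K), (X - C (σ α)) ∣ f.map (algebraMap K L) :=
  Finset.prod_dvd_of_coprime ((pairwise_coprime_X_sub_C hinj).set_pairwise _) fun σ _ ↦
    dvd_iff_isRoot.mpr (by rw [IsRoot, eval_map_algebraMap, aeval_algHom_apply, hα, map_zero])

variable [IsGalois K L]

theorem prod_map_algEquiv_mem_lifts (H : L[X]) :
    ∏ σ : Gal(L/K), H.map (σ : L →+* L) ∈ lifts (algebraMap K L) := by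
  refine (lifts_iff_coeff_lifts _).mpr fun n ↦ (IsGalois.mem_range_algebraMap_iff_fixed _).mpr
    fun τ ↦ ?_
  have hfixed : (∏ σ : Gal(L/K), H.map (σ : L →+* L)).map (τ : L →+* L) =
      ∏ σ : Gal(L/K), H.map (σ : L →+* L) := by
    rw [Polynomial.map_prod]
    simp_rw [Polynomial.map_map]
    exact Fintype.prod_equiv (Equiv.mulLeft τ) _ _ fun σ ↦ rfl
  simpa using congrArg (coeff · n) hfixed

/-- `∏ σ, σ H` is Galois-invariant, so it descends to `K[X]`; it divides `∏ σ, (r - σ α)`,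
which divides `f ∘ r`. -/
theorem finrank_mul_natDegree_mem_divisorDegrees_comp {f r : K[X]} {α : L}
    (hα : aeval α f = 0) (hinj : Function.Injective fun σ : Gal(L/K) ↦ σ α) {H : L[X]}
    (hH : H ∣ r.map (algebraMap K L) - C α) :
    Module.finrank K L * H.natDegree ∈ divisorDegrees (f.comp r) := by
  rcases eq_or_ne H 0 with rfl | hH0
  · simpa using zero_mem_divisorDegrees _
  set r' := r.map (algebraMap K L)
  have hconj (σ : Gal(L/K)) : H.map (σ : L →+* L) ∣ r' - C (σ α) := by
    have hσ : (σ : L →+* L).comp (algebraMap K L) = algebraMap K L := RingHom.ext σ.commutes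
    simpa [r', Polynomial.map_map, hσ] using Polynomial.map_dvd (σ : L →+* L) hH
  have hroots := comp_dvd_comp (prod_X_sub_C_algEquiv_dvd_map hα hinj) r'
  have hdvd : ∏ σ : Gal(L/K), H.map (σ : L →+* L) ∣ (f.comp r).map (algebraMap K L) :=
    calc ∏ σ : Gal(L/K), H.map (σ : L →+* L)
        ∣ ∏ σ : Gal(L/K), (r' - C (σ α)) :=
          Finset.prod_dvd_prod_of_dvd _ _ fun σ _ ↦ hconj σ
      _ = (∏ σ : Gal(L/K), (X - C (σ α))).comp r' := by simp [prod_comp]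
      _ ∣ (f.map (algebraMap K L)).comp r' := by exact hroots
      _ = (f.comp r).map (algebraMap K L) := (map_comp _ _ _).symm
  obtain ⟨G, hG⟩ := prod_map_algEquiv_mem_lifts (K := K) H
  replace hG : G.map (algebraMap K L) = _ := hG
  refine ⟨G, (map_dvd_map' _).mp (hG ▸ hdvd), ?_⟩
  rw [← natDegree_map (algebraMap K L), hG, natDegree_prod _ _ fun σ _ ↦ (map_ne_zero hH0)]
  simp [← IsGalois.card_aut_eq_finrank, Nat.card_eq_fintype_card]

end Galois

open AdjoinRoot in
theorem natDegree_mul_mem_divisorDegrees_comp_X_pow {K : Type*} [Field K] [Finite K] {f : K[X]}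
    (hf : Irreducible f) {q m : ℕ} (hq : q ≠ 0) (hfq : f ∣ X ^ q - 1) (hmq : m.Coprime q)
    (B : ℕ) {s : ℕ} (hs : s ∈ divisorDegrees (X ^ m - 1 : K[X])) :
    f.natDegree * (s * B) ∈ divisorDegrees (f.comp (X ^ (m * B))) := by
  obtain ⟨g, hg, rfl⟩ := hs
  have := Fact.mk hf
  have : FiniteDimensional K (AdjoinRoot f) := (powerBasis hf.ne_zero).finite
  have : Finite (AdjoinRoot f) := Module.finite_of_finite K
  set α := root f
  have hαq : α ^ q = 1 := by
    have h := aeval_eq (f := f) (X ^ q - 1)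
    rw [mk_eq_zero.mpr hfq] at h
    simpa [sub_eq_zero] using h
  have hα0 : α ≠ 0 := ne_zero_pow hq (hαq ▸ one_ne_zero)
  obtain ⟨c, hc⟩ := exists_pow_eq_self_of_coprime
    (hmq.coprime_dvd_right (orderOf_dvd_of_pow_eq_one hαq))
  set β := α ^ c
  have hβ : β ^ m = α := by rw [← pow_mul, mul_comm, pow_mul, hc]
  set H := (g.map (algebraMap K (AdjoinRoot f))).comp (C β⁻¹ * X ^ B)
  have hH : H ∣ X ^ (m * B) - C α := by
    have h := comp_dvd_comp (Polynomial.map_dvd (algebraMap K _) hg) (C β⁻¹ * X ^ B)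
    have key : C α * ((X ^ m - 1 : K[X]).map (algebraMap K _)).comp (C β⁻¹ * X ^ B) =
        X ^ (m * B) - C α := by
      simp only [Polynomial.map_sub, Polynomial.map_pow, map_X, Polynomial.map_one, sub_comp,
        pow_comp, X_comp, one_comp, mul_pow, ← C_pow, inv_pow, hβ, ← pow_mul, mul_sub,
        ← mul_assoc, ← C_mul, mul_inv_cancel₀ hα0, C_1, one_mul, mul_one, mul_comm B m]
    rw [← key]
    exact h.mul_left (C α)
  have hHdeg : H.natDegree = g.natDegree * B := by
    rw [natDegree_comp, natDegree_map, natDegree_C_mul_X_pow _ _ (inv_ne_zero (pow_ne_zero _ hα0))]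
  have hinj : Function.Injective fun σ : Gal(AdjoinRoot f/K) ↦ σ α :=
    fun σ τ h ↦ AlgEquiv.ext fun x ↦
      congrArg (· x) (AdjoinRoot.algHom_ext (g₁ := σ.toAlgHom) (g₂ := τ.toAlgHom) h)
  rw [← hHdeg, ← powerBasis_dim hf.ne_zero, ← (powerBasis hf.ne_zero).finrank]
  exact finrank_mul_natDegree_mem_divisorDegrees_comp (by simp [α]) hinj (by simpa using hH)

open UniqueFactorizationMonoid

variable {p q : ℕ} [Fact p.Prime]

theorem natDegree_eq_orderOf_of_dvd_cyclotomic (hpq : p.Coprime q) {P : (ZMod p)[X]}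
    (hP : P ∣ cyclotomic q (ZMod p)) (hirr : Irreducible P) :
    P.natDegree = orderOf (p : ZMod q) := by
  rw [natDegree_of_dvd_cyclotomic_of_irreducible (p := p) (f := 1) (by simp) (by simpa using hpq)
    hP hirr, ← orderOf_units, ZMod.coe_unitOfCoprime, pow_one]

variable [Fact q.Prime]

theorem exists_image_mul_Iic_subset_divisorDegrees_cyclotomic_comp (hpq : p ≠ q) {m : ℕ}
    (hmq : m.Coprime q) (hm : Iic m ⊆ divisorDegrees (X ^ m - 1 : (ZMod p)[X])) (B : ℕ) :
    ∃ N, orderOf (p : ZMod q) * N = q - 1 ∧ (orderOf (p : ZMod q) * B * ·) '' Iic (N * m) ⊆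
      divisorDegrees ((cyclotomic q (ZMod p)).comp (X ^ (m * B))) := by
  set ℓ := orderOf (p : ZMod q)
  have hpq' : p.Coprime q := (Nat.coprime_primes Fact.out Fact.out).mpr hpq
  have hΦ := prod_normalizedFactors (cyclotomic_ne_zero q (ZMod p))
  set fs := normalizedFactors (cyclotomic q (ZMod p))
  have hdeg (P) (hP : P ∈ fs) : P.natDegree = ℓ :=
    natDegree_eq_orderOf_of_dvd_cyclotomic hpq' (dvd_of_mem_normalizedFactors hP)
      (irreducible_of_normalized_factor P hP)
  have hcard : ℓ * Multiset.card fs = q - 1 := by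
    rw [mul_comm, ← Nat.totient_prime Fact.out, ← natDegree_cyclotomic q (ZMod p),
      ← natDegree_eq_of_degree_eq (degree_eq_degree_of_associated hΦ),
      natDegree_multiset_prod _ (zero_notMem_normalizedFactors _), Multiset.map_congr rfl hdeg,
      Multiset.map_const', Multiset.sum_replicate, smul_eq_mul]
  refine ⟨_, hcard, ?_⟩
  have hΦcomp := hΦ.map (compRingHom (X ^ (m * B)))
  rw [coe_compRingHom_apply, coe_compRingHom_apply, multiset_prod_comp] at hΦcomp
  rw [← divisorDegrees_eq_of_associated hΦcomp, ← Multiset.card_map (·.comp (X ^ (m * B)))]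
  refine image_mul_Iic_subset_divisorDegrees_prod _ ?_
  rintro _ hPcomp _ ⟨u, hu, rfl⟩
  obtain ⟨P, hP, rfl⟩ := Multiset.mem_map.mp hPcomp
  have h := natDegree_mul_mem_divisorDegrees_comp_X_pow (irreducible_of_normalized_factor P hP)
    (Fact.out : q.Prime).ne_zero
    ((dvd_of_mem_normalizedFactors hP).trans (cyclotomic.dvd_X_pow_sub_one q _)) hmq B (hm hu)
  rwa [hdeg P hP, mul_comm u B, ← mul_assoc] at h

theorem X_pow_mul_sub_one_eq_mul_cyclotomic_comp [CommRing R] (n : ℕ) :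
    (X ^ (n * q) - 1 : R[X]) = (X ^ n - 1) * (cyclotomic q R).comp (X ^ n) := by
  have h := congrArg (·.comp (X ^ n)) (cyclotomic_prime_mul_X_sub_one R q)
  simp only [mul_comp, sub_comp, pow_comp, X_comp, one_comp, ← pow_mul] at h
  rw [← h, mul_comm]

theorem Iic_subset_divisorDegrees_X_pow_mul_prime_sub_one (hpq : p ≠ q) {m B : ℕ}
    (hmq : m.Coprime q) (hm : Iic m ⊆ divisorDegrees (X ^ m - 1 : (ZMod p)[X]))
    (hB : Iic (m * B) ⊆ divisorDegrees (X ^ (m * B) - 1 : (ZMod p)[X]))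
    (hℓ : orderOf (p : ZMod q) * B ≤ m * B + 1) :
    Iic (m * B * q) ⊆ divisorDegrees (X ^ (m * B * q) - 1 : (ZMod p)[X]) := by
  obtain ⟨N, hN, hcyc⟩ :=
    exists_image_mul_Iic_subset_divisorDegrees_cyclotomic_comp hpq hmq hm B
  set ℓ := orderOf (p : ZMod q)
  have hq : q = ℓ * N + 1 := by
    have := (Fact.out : q.Prime).two_le
    omega
  have hdeg : m * B * q = m * B + ℓ * B * (N * m) := by
    rw [hq]
    ring
  calc Iic (m * B * q) = Iic (m * B + ℓ * B * (N * m)) := by rw [hdeg]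
    _ ⊆ Iic (m * B) + (ℓ * B * ·) '' Iic (N * m) :=
        Nat.Iic_add_mul_subset_Iic_add_image_mul hℓ
    _ ⊆ _ := (add_subset_add hB hcyc).trans add_subset_divisorDegrees_mul
    _ = _ := by rw [X_pow_mul_sub_one_eq_mul_cyclotomic_comp (m * B)]

theorem Iic_subset_divisorDegrees_X_pow_mul_pow_sub_one (hpq : p ≠ q) {m : ℕ}
    (hmq : m.Coprime q) (hm : Iic m ⊆ divisorDegrees (X ^ m - 1 : (ZMod p)[X]))
    (hℓ : orderOf (p : ZMod q) ≤ m) (k : ℕ) :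
    Iic (m * q ^ k) ⊆ divisorDegrees (X ^ (m * q ^ k) - 1 : (ZMod p)[X]) := by
  induction k with
  | zero => simpa using hm
  | succ k ih =>
    rw [pow_succ, ← mul_assoc]
    exact Iic_subset_divisorDegrees_X_pow_mul_prime_sub_one hpq hmq hm ih
      ((Nat.mul_le_mul_right _ hℓ).trans (Nat.le_succ _))

end Polynomial

theorem pPractical_iff {p n : ℕ} :
    PPractical p n ↔ Iic n ⊆ divisorDegrees (X ^ n - 1 : (ZMod p)[X]) := by
  refine ⟨fun h t ht ↦ ?_, fun h t _ ht ↦ h ht⟩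
  rcases Nat.eq_zero_or_pos t with rfl | ht0
  · exact zero_mem_divisorDegrees _
  · exact h t ht0 ht

theorem pPractical_mul_pow_self {p m : ℕ} [Fact p.Prime] (hm : PPractical p m) (k : ℕ) :
    PPractical p (m * p ^ k) := by
  rw [pPractical_iff] at hm ⊢
  have h := Iic_mul_subset_divisorDegrees_pow hm (p ^ k)
  rwa [mul_comm, sub_pow_char_pow, one_pow, ← pow_mul] at h

theorem lstar_eq_orderOf {p q : ℕ} (h : ¬p ∣ q) : lstar p q = orderOf (p : ZMod q) := by
  have hq : ordCompl[p] q = q := by simp [Nat.factorization_eq_zero_of_not_dvd h]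
  rw [lstar, hq]

theorem stmt16_general (p m q : ℕ) (hp : p.Prime) (hmp : PPractical p m)
    (hq : q.Prime) (hcop : Nat.gcd q m = 1) :
    (lstar p q ≤ m + 1 → PPractical p (m * q)) ∧
    (∀ k : ℕ, 2 ≤ k → lstar p q ≤ m → PPractical p (m * q ^ k)) := by
  have := Fact.mk hp
  rcases eq_or_ne p q with rfl | hpq
  · exact ⟨fun _ ↦ by simpa using pPractical_mul_pow_self hmp 1,
      fun k _ _ ↦ pPractical_mul_pow_self hmp k⟩
  have := Fact.mk hq
  have hmq : m.Coprime q := Nat.coprime_comm.mp hcop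
  rw [lstar_eq_orderOf fun h ↦ hpq ((Nat.prime_dvd_prime_iff_eq hp hq).mp h)]
  simp only [pPractical_iff] at hmp ⊢
  constructor
  · intro hℓ
    simpa using Iic_subset_divisorDegrees_X_pow_mul_prime_sub_one hpq hmq hmp (B := 1)
      (by simpa using hmp) (by simpa using hℓ)
  · intro k _ hℓ
    exact Iic_subset_divisorDegrees_X_pow_mul_pow_sub_one hpq hmq hmp hℓ k

theorem stmt16 (p m q : ℕ) (hp : p.Prime) (hm : 0 < m) (hmp : PPractical p m)
    (hq : q.Prime) (hcop : Nat.gcd q m = 1) :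
    (lstar p q ≤ m + 1 → PPractical p (m * q)) ∧
    (∀ k : ℕ, 2 ≤ k → lstar p q ≤ m → PPractical p (m * q ^ k)) :=
  stmt16_general p m q hp hmp hq hcop
end
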